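/- arXiv:1901.02417 — 2 statements merged into one kernel-verified Lean document; each statement's English description precedes it below -/
import Mathlib

section
/- If λ is weakly inaccessible, ω<θ<λ is regular, and GH(θ,λ)=λ, then the set E={δ<λ : GH(θ,δ)=δ} is closed under suprema of increasing sequences of regular length >θ and is unbounded in λ. -/
open Cardinal Set

namespace Paper

/-- `g < f` modulo the ideal of bounded subsets of `θ` (functions viewed on `Iio θ`). -/
def ltBd (θo : Ordinal) (g f : Ordinal → Ordinal) : Prop :=
  ∃ β < θo, ∀ i, β ≤ i → i < θo → g i < f i

/-- The ordinal rank of an accessible element of a relation: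
`rank(a) = sup { rank(b) + 1 : b r a }`. -/
noncomputable def accRank {α : Type*} {r : α → α → Prop} {a : α} (h : Acc r a) : Ordinal.{0} :=
  Acc.rec (motive := fun _ _ => Ordinal.{0})
    (fun x _ ih => sSup (Set.range fun y : {y : α // r y x} => Order.succ (ih y.1 y.2))) h

open scoped Classical in
/-- The Galvin–Hajnal rank `‖f‖` of `f : θ → ON` modulo the bounded ideal on `θ`:
`‖f‖ = sup {‖g‖ + 1 : g <_bd f}` (junk value `0` if `f` is not in the well-founded part). -/
noncomputable def GHrank (θo : Ordinal) (f : Ordinal → Ordinal) : Ordinal :=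
  if h : Acc (ltBd θo) f then accRank h else 0

/-- `GH(θ, λ) = min { α : ∀ f : θ → λ, ‖f‖ < α }`. -/
noncomputable def GHbound (θo lamo : Ordinal) : Ordinal :=
  sInf {a : Ordinal | ∀ f : Ordinal → Ordinal, (∀ i < θo, f i < lamo) → GHrank θo f < a}

/-- A weakly inaccessible cardinal: an uncountable regular limit cardinal. -/
def IsWInaccessible (c : Cardinal) : Prop := ℵ₀ < c ∧ c.IsRegular ∧ Order.IsSuccLimit c

/-!
Two facts about the rank drive everything: `g <_bd f` implies `‖g‖ < ‖f‖`, and the constant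
function with value `α` has rank at least `α`. Hence `δ ≤ GH(θ, δ) ≤ ‖const δ‖` for every `δ`,
so `GH(θ, λ) = λ` makes `δ ↦ GH(θ, δ)` map `λ` into itself. If `δ` is the supremum of a monotone
sequence `δ_j` whose length has cofinality `> θ`, every `f : θ → δ` is bounded by a single `δ_j`,
so `GH(θ, δ) ≤ sup_j GH(θ, δ_j)`. This gives the closure of `E`; iterating
`x ↦ max(b, GH(θ, x)) + 1` continuously `θ⁺` times below `λ` gives elements of `E` above `b`.
-/

lemma iSup_Iio_lt_of_card_lt_cof {o a : Ordinal.{u}} {g : Iio o → Ordinal.{u}}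
    (ha : o.card < a.cof) (hg : ∀ i, g i < a) : ⨆ i, g i < a :=
  Ordinal.lift_iSup_lt_of_lt_cof
    (by rwa [mk_Iio_ordinal, lift_lift, ← Ordinal.lift_cof, lift_lt]) hg

noncomputable def supIterate (Φ : Ordinal.{u} → Ordinal.{u}) (α : Ordinal.{u}) : Ordinal.{u} :=
  Φ (⨆ β : Iio α, supIterate Φ β)
termination_by α
decreasing_by exact β.2

section supIterate

variable {Φ : Ordinal.{u} → Ordinal.{u}}

lemma supIterate_eq (Φ : Ordinal.{u} → Ordinal.{u}) (α : Ordinal.{u}) :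
    supIterate Φ α = Φ (⨆ β : Iio α, supIterate Φ β) := by
  rw [supIterate]

lemma iSup_lt_supIterate (hΦ : ∀ x, x < Φ x) (α : Ordinal.{u}) :
    ⨆ β : Iio α, supIterate Φ β < supIterate Φ α :=
  supIterate_eq Φ α ▸ hΦ _

lemma supIterate_strictMono (hΦ : ∀ x, x < Φ x) : StrictMono (supIterate Φ) := fun β α h =>
  (Ordinal.le_iSup (fun γ : Iio α => supIterate Φ γ) ⟨β, h⟩).trans_lt (iSup_lt_supIterate hΦ α)

lemma supIterate_succ (hΦ : ∀ x, x < Φ x) (j : Ordinal.{u}) :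
    supIterate Φ (Order.succ j) = Φ (supIterate Φ j) := by
  rw [supIterate_eq]
  congr 1
  exact le_antisymm
    (Ordinal.iSup_le fun β => (supIterate_strictMono hΦ).monotone (Order.lt_succ_iff.1 β.2))
    (Ordinal.le_iSup (fun γ : Iio (Order.succ j) => supIterate Φ γ) ⟨j, Order.lt_succ j⟩)

lemma supIterate_lt {c : Cardinal.{u}} (hc : c.IsRegular) (hΦ : ∀ x < c.ord, Φ x < c.ord)
    {α : Ordinal.{u}} (hα : α < c.ord) : supIterate Φ α < c.ord := by
  induction α using WellFoundedLT.induction with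
  | _ α IH =>
    rw [supIterate_eq]
    exact hΦ _ (iSup_Iio_lt_of_card_lt_cof (by rw [hc.cof_ord]; exact lt_ord.1 hα)
      fun β => IH β β.2 (β.2.trans hα))

end supIterate

lemma ltBd_wellFounded {θo : Ordinal.{u}} (hθ : ℵ₀ < θo.cof) : WellFounded (ltBd θo) := by
  refine wellFounded_iff_isEmpty_descending_chain.2 ⟨fun ⟨F, hF⟩ => ?_⟩
  choose β hβ hlt using hF
  -- at the countable supremum of the witnesses the chain descends forever
  have hB : ⨆ n, β n < θo := Ordinal.lift_iSup_lt_of_lt_cof (by simpa using hθ) hβ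
  exact not_strictAnti_of_wellFoundedLT (fun n => F n (⨆ n, β n))
    (strictAnti_nat_of_succ_lt fun n => hlt n _ (Ordinal.le_iSup β n) hB)

lemma ltBd_of_eqOn_tail {θo β : Ordinal.{u}} {g f₁ f₂ : Ordinal.{u} → Ordinal.{u}} (hβ : β < θo)
    (h : ∀ i, β ≤ i → i < θo → f₁ i = f₂ i) (hg : ltBd θo g f₁) : ltBd θo g f₂ := by
  obtain ⟨γ, hγ, hlt⟩ := hg
  exact ⟨max γ β, max_lt hγ hβ, fun i hi hiθ =>
    h i (le_of_max_le_right hi) hiθ ▸ hlt i (le_of_max_le_left hi) hiθ⟩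

lemma accRank_eq {α : Type*} {r : α → α → Prop} {a : α} (h : Acc r a) :
    accRank h = sSup (range fun y : {y // r y a} => Order.succ (accRank (h.inv y.2))) := by
  cases h
  rfl

section rank

variable {θo δ : Ordinal.{0}} {f g : Ordinal.{0} → Ordinal.{0}}

lemma GHrank_eq (hf : Acc (ltBd θo) f) :
    GHrank θo f = sSup ((fun g => Order.succ (GHrank θo g)) '' {g | ltBd θo g f}) := by
  rw [GHrank, dif_pos hf, accRank_eq, image_eq_range]
  congr 2
  funext g
  rw [GHrank, dif_pos (hf.inv g.2)]

lemma GHrank_congr (wf : WellFounded (ltBd.{0, 0} θo)) {β : Ordinal.{0}} (hβ : β < θo)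
    (h : ∀ i, β ≤ i → i < θo → f i = g i) : GHrank θo f = GHrank θo g := by
  rw [GHrank_eq (wf.apply f), GHrank_eq (wf.apply g)]
  congr 2
  ext g
  exact ⟨ltBd_of_eqOn_tail hβ h, ltBd_of_eqOn_tail hβ fun i h₁ h₂ => (h i h₁ h₂).symm⟩

lemma bddAbove_succ_GHrank_image (wf : WellFounded (ltBd.{0, 0} θo))
    (f : Ordinal.{0} → Ordinal.{0}) :
    BddAbove ((fun g => Order.succ (GHrank θo g)) '' {g | ltBd θo g f}) := by
  -- every `g <_bd f` has the rank of a function from the small type `∏_{i < θ} [0, f i]`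
  let extend : (∀ i : Iio θo, Iic (f i)) → Ordinal → Ordinal :=
    fun v i => if h : i < θo then v ⟨i, h⟩ else 0
  refine (Ordinal.bddAbove_of_small
    (s := range fun v => Order.succ (GHrank θo (extend v)))).mono ?_
  rintro _ ⟨g, ⟨β, hβ, hlt⟩, rfl⟩
  refine ⟨fun i => ⟨min (g i) (f i), mem_Iic.2 (min_le_right _ _)⟩, ?_⟩
  dsimp only
  rw [GHrank_congr wf hβ (g := g) fun i h₁ h₂ => ?_]
  simp [extend, h₂, (hlt i h₁ h₂).le]

lemma GHrank_lt_GHrank (wf : WellFounded (ltBd.{0, 0} θo)) (h : ltBd θo g f) :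
    GHrank θo g < GHrank θo f := by
  rw [GHrank_eq (wf.apply f)]
  exact (Order.lt_succ _).trans_le (le_csSup (bddAbove_succ_GHrank_image wf f) ⟨g, h, rfl⟩)

lemma GHrank_lt_GHrank_const (wf : WellFounded (ltBd.{0, 0} θo)) (hθ : 0 < θo)
    (hg : ∀ i < θo, g i < δ) : GHrank θo g < GHrank θo fun _ => δ :=
  GHrank_lt_GHrank wf ⟨0, hθ, fun i _ hi => hg i hi⟩

lemma le_GHrank_const (wf : WellFounded (ltBd.{0, 0} θo)) (hθ : 0 < θo) (α : Ordinal.{0}) :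
    α ≤ GHrank θo fun _ => α := by
  induction α using WellFoundedLT.induction with
  | _ α IH =>
    exact le_of_forall_lt fun β hβ =>
      (IH β hβ).trans_lt (GHrank_lt_GHrank_const wf hθ fun _ _ => hβ)

end rank

section bound

variable {θo δ c o : Ordinal.{0}} {g s : Ordinal.{0} → Ordinal.{0}}

lemma GHbound_le_of_forall
    (h : ∀ g : Ordinal → Ordinal, (∀ i < θo, g i < δ) → GHrank θo g < c) : GHbound θo δ ≤ c :=
  csInf_le' h

lemma GHbound_le_GHrank_const (wf : WellFounded (ltBd.{0, 0} θo)) (hθ : 0 < θo)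
    (δ : Ordinal.{0}) :
    GHbound θo δ ≤ GHrank θo fun _ => δ :=
  GHbound_le_of_forall fun _ => GHrank_lt_GHrank_const wf hθ

lemma GHrank_lt_GHbound (wf : WellFounded (ltBd.{0, 0} θo)) (hθ : 0 < θo)
    (hg : ∀ i < θo, g i < δ) : GHrank θo g < GHbound θo δ :=
  csInf_mem (s := {a | ∀ f : Ordinal → Ordinal, (∀ i < θo, f i < δ) → GHrank θo f < a})
    ⟨_, fun _ => GHrank_lt_GHrank_const wf hθ⟩ g hg

lemma self_le_GHbound (wf : WellFounded (ltBd.{0, 0} θo)) (hθ : 0 < θo) (δ : Ordinal.{0}) :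
    δ ≤ GHbound θo δ :=
  le_of_forall_lt fun β hβ =>
    (le_GHrank_const wf hθ β).trans_lt (GHrank_lt_GHbound wf hθ fun _ _ => hβ)

lemma GHbound_iSup_le (wf : WellFounded (ltBd.{0, 0} θo)) (hθ : 0 < θo)
    (hs : MonotoneOn s (Iio o)) (ho : θo.card < o.cof)
    (h : ∀ j < o, GHbound θo (s j) ≤ c) : GHbound θo (⨆ j : Iio o, s j) ≤ c := by
  refine GHbound_le_of_forall fun g hg => ?_
  have : ∀ i : Iio θo, ∃ j : Iio o, g i < s j := fun i => Ordinal.lt_iSup_iff.1 (hg i i.2)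
  choose j hj using this
  have hJ : ⨆ i, (j i : Ordinal) < o := iSup_Iio_lt_of_card_lt_cof ho fun i => (j i).2
  refine (GHrank_lt_GHbound wf hθ fun i hi => ?_).trans_le (h _ hJ)
  exact (hj ⟨i, hi⟩).trans_le (hs (j _).2 hJ (Ordinal.le_iSup (fun i => (j i : Ordinal)) _))

lemma GHbound_iSup_eq_self (wf : WellFounded (ltBd.{0, 0} θo)) (hθ : 0 < θo)
    (hs : MonotoneOn s (Iio o)) (ho : θo.card < o.cof)
    (h : ∀ j < o, GHbound θo (s j) = s j) : GHbound θo (⨆ j : Iio o, s j) = ⨆ j : Iio o, s j :=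
  le_antisymm
    (GHbound_iSup_le wf hθ hs ho fun j hj =>
      (h j hj).trans_le (Ordinal.le_iSup (fun i : Iio o => s i) ⟨j, hj⟩))
    (self_le_GHbound wf hθ _)

end bound

lemma exists_gt_GHbound_eq_self {θo : Ordinal.{0}} (wf : WellFounded (ltBd.{0, 0} θo)) (hθ : 0 < θo)
    {κ c : Cardinal} (hκ : κ.IsRegular) (hθκ : θo.card < κ) (hc : c.IsRegular) (hκc : κ < c)
    (hGH : ∀ x < c.ord, GHbound θo x < c.ord) {b : Ordinal} (hb : b < c.ord) :
    ∃ δ < c.ord, GHbound θo δ = δ ∧ b < δ := by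
  set Φ := fun x => Order.succ (max b (GHbound θo x))
  have hΦ : ∀ x, x < Φ x := fun x =>
    (self_le_GHbound wf hθ x).trans_lt (Order.lt_succ_of_le (le_max_right _ _))
  have hΦc : ∀ x < c.ord, Φ x < c.ord := fun x hx =>
    (isSuccLimit_ord hc.aleph0_le).succ_lt (max_lt hb (hGH x hx))
  have hδ : ∀ j < κ.ord, supIterate Φ j ≤ ⨆ j : Iio κ.ord, supIterate Φ j := fun j hj =>
    Ordinal.le_iSup (fun β : Iio κ.ord => supIterate Φ β) ⟨j, hj⟩
  refine ⟨_, (iSup_lt_supIterate hΦ _).trans (supIterate_lt hc hΦc (ord_lt_ord.2 hκc)),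
    le_antisymm ?_ (self_le_GHbound wf hθ _), ?_⟩
  · refine GHbound_iSup_le wf hθ ((supIterate_strictMono hΦ).monotone.monotoneOn _)
      (by rwa [hκ.cof_ord]) fun j hj => ?_
    calc GHbound θo (supIterate Φ j) ≤ Φ (supIterate Φ j) :=
          (le_max_right _ _).trans (Order.le_succ _)
      _ = supIterate Φ (Order.succ j) := (supIterate_succ hΦ j).symm
      _ ≤ _ := hδ _ ((isSuccLimit_ord hκ.aleph0_le).succ_lt hj)
  · refine lt_of_lt_of_le ?_ (hδ 0 hκ.ord_pos)
    rw [supIterate_eq]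
    exact Order.lt_succ_of_le (le_max_left _ _)

/-- if `λ` is weakly inaccessible, `ω < θ < λ` is regular and
`GH(θ, λ) = λ`, then `E = {δ < λ : GH(θ, δ) = δ}` is closed under suprema of
increasing sequences of regular length `> θ` (taken below `λ`) and is unbounded in `λ`. -/
theorem stmt9 (lam θ : Cardinal) (hw : IsWInaccessible lam)
    (hθreg : θ.IsRegular) (hθ0 : ℵ₀ < θ) (hθlam : θ < lam)
    (hGH : GHbound θ.ord lam.ord = lam.ord) :
    (∀ κ : Cardinal, κ.IsRegular → θ < κ →
      ∀ f : Ordinal → Ordinal, StrictMonoOn f (Set.Iio κ.ord) →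
        (∀ i < κ.ord, f i ∈ {δ : Ordinal | δ < lam.ord ∧ GHbound θ.ord δ = δ}) →
        sSup (f '' Set.Iio κ.ord) < lam.ord →
        sSup (f '' Set.Iio κ.ord) ∈ {δ : Ordinal | δ < lam.ord ∧ GHbound θ.ord δ = δ}) ∧
    (∀ b < lam.ord, ∃ δ ∈ {δ : Ordinal | δ < lam.ord ∧ GHbound θ.ord δ = δ}, b < δ) := by
  obtain ⟨-, hlam, hlamlim⟩ := hw
  have wf : WellFounded (ltBd.{0, 0} θ.ord) := ltBd_wellFounded (by rwa [hθreg.cof_ord])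
  have hθpos : 0 < θ.ord := hθreg.ord_pos
  have hGHlt : ∀ x < lam.ord, GHbound θ.ord x < lam.ord := fun x hx =>
    (GHbound_le_GHrank_const wf hθpos x).trans_lt (hGH ▸ GHrank_lt_GHbound wf hθpos fun _ _ => hx)
  refine ⟨fun κ hκ hθκ f hf hmem hδ => ⟨hδ, ?_⟩, fun b hb => ?_⟩
  · rw [sSup_image']
    exact GHbound_iSup_eq_self wf hθpos hf.monotoneOn (by rwa [hκ.cof_ord, card_ord])
      fun j hj => (hmem j hj).2
  · obtain ⟨δ, hδ, hfix, hbδ⟩ := exists_gt_GHbound_eq_self wf hθpos (isRegular_succ hθreg.aleph0_le)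
      (by rw [card_ord]; exact Order.lt_succ θ) hlam (hlamlim.succ_lt hθlam) hGHlt hb
    exact ⟨δ, ⟨hδ, hfix⟩, hbδ⟩

end Paper
end

section
/- Let I be an ideal on a set A and θ a regular cardinal. If I is weakly θ-saturated and θ-indecomposable, then for every ⊆-increasing θ-sequence ⟨B_i : i<θ⟩ of subsets of A there exists j*<θ such that for all j with j*≤j<θ, the symmetric difference of B_j and ⋃_{i<θ}B_i lies in I. -/
/-!
Suppose the conclusion fails. Then every tail `(⋃ i, B i) \ B k` is `I`-positive, so by
indecomposability every `B k` is followed by some `B k'` with `B k' \ B k` positive. Regularity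
of `θ` lets us choose recursively, for each `α < θ`, a stage `s α` above all earlier `j β` and
then `j α` with `B (j α) \ B (s α)` positive. These `θ` differences are pairwise disjoint, and
adding the uncovered part of `A` to one of them partitions `A` into `θ` positive sets.
-/

open Cardinal Set

namespace Paper

variable {A : Type}

/-- `I` is weakly `θ`-saturated: the underlying set cannot be partitioned into `θ`-many
pairwise disjoint `I`-positive pieces. -/
def WeaklySaturated (I : Order.Ideal (Set A)) (θ : Cardinal.{0}) : Prop :=
  ¬ ∃ f : θ.ord.ToType → Set A, (Pairwise fun i j => Disjoint (f i) (f j)) ∧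
      (∀ i, f i ∉ I) ∧ (⋃ i, f i) = Set.univ

/-- `I` is `θ`-indecomposable: `I` is closed under unions of `⊆`-increasing
`θ`-sequences of its members. -/
def Indecomposable (I : Order.Ideal (Set A)) (θ : Cardinal.{0}) : Prop :=
  ∀ f : θ.ord.ToType → Set A, Monotone f → (∀ i, f i ∈ I) → (⋃ i, f i) ∈ I

/-- `I` is `θ`-irregular: any `θ`-sequence of `I`-positive sets has a subfamily of full
size `θ` with nonempty intersection. -/
def Irregular (I : Order.Ideal (Set A)) (θ : Cardinal.{0}) : Prop :=
  ∀ f : θ.ord.ToType → Set A, (∀ i, f i ∉ I) →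
    ∃ H : Set θ.ord.ToType, Cardinal.mk H.Elem = θ ∧ (⋂ i ∈ H, f i).Nonempty

open Function Order

theorem exists_cover_of_pairwise_disjoint {α ι : Type*} (i₀ : ι) {D : ι → Set α}
    (hD : Pairwise (Disjoint on D)) :
    ∃ E : ι → Set α,
      Pairwise (Disjoint on E) ∧ (∀ i, D i ⊆ E i) ∧ ⋃ i, E i = Set.univ := by
  classical
  refine ⟨fun i => if i = i₀ then D i ∪ (⋃ k, D k)ᶜ else D i, ?_, ?_, ?_⟩
  · intro i j hij
    dsimp only [onFun]
    split_ifs with hi hj hj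
    · exact absurd (hi.trans hj.symm) hij
    · exact disjoint_union_left.2 ⟨hD hij, disjoint_compl_left.mono_right (subset_iUnion D j)⟩
    · exact disjoint_union_right.2 ⟨hD hij, disjoint_compl_right.mono_left (subset_iUnion D i)⟩
    · exact hD hij
  · intro i
    dsimp only
    split_ifs
    exacts [subset_union_left, subset_rfl]
  · refine eq_univ_of_forall fun x => ?_
    by_cases hx : x ∈ ⋃ k, D k
    · obtain ⟨k, hk⟩ := mem_iUnion.1 hx
      exact mem_iUnion.2 ⟨k, by split_ifs <;> simp [hk]⟩
    · exact mem_iUnion.2 ⟨i₀, by rw [if_pos rfl]; exact Or.inr hx⟩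

theorem WeaklySaturated.exists_mem_of_pairwise_disjoint {I : Order.Ideal (Set A)}
    {θ : Cardinal.{0}} (hsat : WeaklySaturated I θ) [Nonempty θ.ord.ToType]
    {D : θ.ord.ToType → Set A} (hD : Pairwise (Disjoint on D)) : ∃ i, D i ∈ I := by
  by_contra! hpos
  obtain ⟨E, hE, hDE, hcover⟩ := exists_cover_of_pairwise_disjoint (Classical.arbitrary _) hD
  exact hsat ⟨E, hE, fun i hi => hpos i (I.lower (hDE i) hi), hcover⟩

theorem Indecomposable.exists_diff_notMem {I : Order.Ideal (Set A)}
    {θ : Cardinal.{0}} (hind : Indecomposable I θ) {B : θ.ord.ToType → Set A} (hB : Monotone B)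
    {k : θ.ord.ToType} (hk : (⋃ i, B i) \ B k ∉ I) : ∃ k', B k' \ B k ∉ I := by
  by_contra! h
  rw [iUnion_sdiff] at hk
  exact hk (hind _ (fun i j hij => sdiff_subset_sdiff_left (hB hij)) h)

theorem _root_.Cardinal.IsRegular.mk_Iio_lt_cof_toType {θ : Cardinal} (hθ : θ.IsRegular)
    (α : θ.ord.ToType) : #(Iio α) < cof θ.ord.ToType := by
  rw [Ordinal.cof_toType, hθ.cof_ord]
  simpa using mk_Iio_lt α (by simp)

section RegularWellOrder

variable {ι : Type*} [LinearOrder ι]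

theorem exists_forall_lt_of_mk_Iio_lt_cof {α : ι} (hα : #(Iio α) < cof ι)
    (g : ∀ β, β < α → ι) : ∃ u, ∀ β hβ, g β hβ < u := by
  have : ¬ IsCofinal (range fun β : Iio α => g β β.2) := fun h =>
    (cof_le h).not_gt (mk_range_le.trans_lt hα)
  obtain ⟨u, hu⟩ := not_isCofinal_iff.1 this
  exact ⟨u, fun β hβ => hu _ ⟨⟨β, hβ⟩, rfl⟩⟩

theorem exists_pairwise_disjoint_diff [WellFoundedLT ι] (hι : ∀ α : ι, #(Iio α) < cof ι)
    {X : Type*} {B : ι → Set X} (hB : Monotone B) {p : Set X → Prop}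
    (h : ∀ k, ∃ k', p (B k' \ B k)) :
    ∃ D : ι → Set X, Pairwise (Disjoint on D) ∧ ∀ i, p (D i) := by
  choose next hnext using h
  choose ub hub using fun α => exists_forall_lt_of_mk_Iio_lt_cof (hι α)
  let j : ι → ι := WellFoundedLT.fix fun α IH => next (ub α IH)
  let s : ι → ι := fun α => ub α fun β _ => j β
  have hj : ∀ α, j α = next (s α) := WellFoundedLT.fix_eq _
  have hjs : ∀ β α, β < α → j β < s α := fun β α h => hub α (fun β _ => j β) β h
  have hp : ∀ α, p (B (j α) \ B (s α)) := fun α => by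
    rw [hj α]
    exact hnext (s α)
  refine ⟨fun α => B (j α) \ B (s α), ?_, hp⟩
  -- an earlier piece lies in `B (j β) ⊆ B (s α)`, which is removed from the `α`-th piece
  exact (pairwise_disjoint_on _).2 fun β α h =>
    disjoint_sdiff_right.mono_left (sdiff_subset.trans (hB (hjs β α h).le))

end RegularWellOrder

/-- if `I` is weakly `θ`-saturated and `θ`-indecomposable (`θ` regular),
then every `⊆`-increasing `θ`-sequence `⟨B_i⟩` is eventually equal, modulo `I`, to its
union: there is `j* < θ` with `B_j △ ⋃_i B_i ∈ I` for all `j ≥ j*`. -/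
theorem stmt11 (I : Order.Ideal (Set A)) (θ : Cardinal.{0}) (hreg : θ.IsRegular)
    (hsat : WeaklySaturated I θ) (hind : Indecomposable I θ)
    (B : θ.ord.ToType → Set A) (hmono : Monotone B) :
    ∃ j' : θ.ord.ToType, ∀ j, j' ≤ j → symmDiff (B j) (⋃ i, B i) ∈ I := by
  by_contra! hcon
  have htail : ∀ k, (⋃ i, B i) \ B k ∉ I := fun k hk => by
    obtain ⟨j, hkj, hj⟩ := hcon k
    rw [symmDiff_of_le (subset_iUnion B j)] at hj
    exact hj (I.lower (sdiff_subset_sdiff_right (hmono hkj)) hk)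
  obtain ⟨D, hD, hpos⟩ := exists_pairwise_disjoint_diff (p := (· ∉ I))
    hreg.mk_Iio_lt_cof_toType hmono fun k => hind.exists_diff_notMem hmono (htail k)
  have : Nonempty θ.ord.ToType := Ordinal.nonempty_toType_iff.2 hreg.ord_pos.ne'
  obtain ⟨i, hi⟩ := hsat.exists_mem_of_pairwise_disjoint hD
  exact hpos i hi

end Paper
end
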